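/- Tightly Timed Response yields node-based common knowledge: suppose the system R solves a TTR instance, meaning (i) in each run, either all responses occur or none, and each response a_h occurs at a fixed node α_h = ⟨i_h, t_h⟩ whenever it occurs, with the same times across runs in which responses occur; (ii) each agent knows at its response node whether its own response occurs (occurrence of a_h at t_h is determined by r_{i_h}(t_h)); and (iii) responses occur no earlier than the trigger event e_s, whose occurrence by the earliest response time t' is entailed by any response occurring. Then in any run r where e_s occurs and the responses are performed at nodes A = {α_1,…,α_k}, we have (R,r) ⊨ C_A occurred_{t'}(e_s). -/
import Mathlib


variable {Run Node State : Type}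

/-- Node-based knowledge: `K R L α φ r` iff `φ` holds at all runs of `R`
locally indistinguishable from `r` at node `α`. -/
def K (R : Set Run) (L : Node → Run → State) (α : Node) (φ : Run → Prop) (r : Run) : Prop :=
  ∀ r' ∈ R, L α r' = L α r → φ r'

/-- Mutual knowledge at a set of nodes. -/
def E (R : Set Run) (L : Node → Run → State) (A : Set Node) (φ : Run → Prop) (r : Run) : Prop :=
  ∀ α ∈ A, K R L α φ r

/-- Node-based common knowledge: `(E_A)^k φ` for every `k ≥ 1`. -/
def C (R : Set Run) (L : Node → Run → State) (A : Set Node) (φ : Run → Prop) (r : Run) : Prop :=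
  ∀ k : ℕ, 1 ≤ k → (E R L A)^[k] φ r

/-- Tightly Timed Response yields node-based common knowledge: if each response
predicate is local to its node, all responses are (provably, throughout `R`)
equivalent to one another and entail the trigger having occurred by the earliest
response time, then in any run of `R` in which the responses are performed,
the occurrence of the trigger is common knowledge at the response nodes. -/
theorem ttr_common_knowledge {ι : Type} [Nonempty ι]
    (R : Set Run) (L : Node → Run → State) (α : ι → Node)
    (Resp : ι → Run → Prop) (Trig : Run → Prop)
    (hloc : ∀ (h : ι) (r r' : Run), L (α h) r' = L (α h) r → (Resp h r ↔ Resp h r'))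
    (hiff : ∀ h g : ι, ∀ r ∈ R, (Resp h r ↔ Resp g r))
    (htrig : ∀ h : ι, ∀ r ∈ R, Resp h r → Trig r)
    (r : Run) (hr : r ∈ R) (hresp : ∀ h : ι, Resp h r) :
    C R L (Set.range α) Trig r := by
  -- Φ: the "fixed point" property
  set A := Set.range α
  have htrig' : ∀ s, (s ∈ R ∧ ∀ h : ι, Resp h s) → Trig s := fun s hs =>
    htrig (Classical.arbitrary ι) s hs.1 (hs.2 _)
  -- Φ → E Φ
  have hstep : ∀ s, (s ∈ R ∧ ∀ h : ι, Resp h s) →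
      E R L A (fun t => t ∈ R ∧ ∀ h : ι, Resp h t) s := by
    rintro s hs β ⟨h, rfl⟩ r' hr' hL
    refine ⟨hr', fun g => ?_⟩
    exact (hiff h g r' hr').mp ((hloc h s r' hL).mp (hs.2 h))
  -- E is monotone
  have hmono : ∀ (φ ψ : Run → Prop), (∀ s, φ s → ψ s) →
      ∀ s, E R L A φ s → E R L A ψ s := by
    intro φ ψ himp s hφ β hβ r' hr' hL
    exact himp r' (hφ β hβ r' hr' hL)
  -- iterate preserves implication
  have hitermono : ∀ k (φ ψ : Run → Prop), (∀ s, φ s → ψ s) →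
      ∀ s, (E R L A)^[k] φ s → (E R L A)^[k] ψ s := by
    intro k
    induction k with
    | zero => intro φ ψ h s; exact h s
    | succ n ih =>
      intro φ ψ h s
      rw [Function.iterate_succ_apply', Function.iterate_succ_apply']
      exact hmono _ _ (ih φ ψ h) s
  -- Φ → E^[k] Φ for all k
  have hiter : ∀ k : ℕ, ∀ s, (s ∈ R ∧ ∀ h : ι, Resp h s) →
      (E R L A)^[k] (fun t => t ∈ R ∧ ∀ h : ι, Resp h t) s := by
    intro k
    induction k with
    | zero => intro s hs; exact hs
    | succ n ih =>
      intro s hs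
      rw [Function.iterate_succ_apply]
      exact hitermono n _ _ hstep s (ih s hs)
  intro k _
  exact hitermono k _ _ htrig' r (hiter k r ⟨hr, hresp⟩)
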